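/- Let G be a finite simple graph and let m : L_G → ℤ be a function on the bond lattice such that m(0̂) = 1 and for every π ∈ L_G, Σ_{0̂ ≤ σ ≤ π} (-1)^{l - |σ|} m(σ) q^{|σ|} = P(G(π), q), where G(π) is the disjoint union of the subgraphs induced by the blocks of π. Then for all π ∈ L_G, μ(0̂, π) = (-1)^{l - |π|} m(π). -/

import Mathlib

open Finset Polynomial
open scoped Classical

variable {V : Type} [Fintype V] [DecidableEq V]

/-- A bond-lattice element: a partition of the vertex set all of whose blocks
induce connected subgraphs. -/
def IsBondPartition (G : SimpleGraph V) (π : Finset (Finset V)) : Prop :=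
  (∀ v : V, ∃! B, B ∈ π ∧ v ∈ B) ∧
  ∀ B ∈ π, (G.induce (B : Set V)).Connected

noncomputable def bondFinset (G : SimpleGraph V) : Finset (Finset (Finset V)) :=
  Finset.univ.filter (IsBondPartition G)

/-- The partition of the vertex set into singletons. -/
def botPartition (V : Type) [Fintype V] [DecidableEq V] : Finset (Finset V) :=
  Finset.univ.image fun v => ({v} : Finset V)

/-- `Refines π σ` : every block of `π` is contained in some block of `σ`. -/
def Refines (π σ : Finset (Finset V)) : Prop :=
  ∀ B ∈ π, ∃ C ∈ σ, B ⊆ C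

/-- A polynomial is the chromatic polynomial of `G` if it counts proper colorings. -/
def IsChromaticPolynomial (G : SimpleGraph V) (P : Polynomial ℤ) : Prop :=
  ∀ n : ℕ, P.eval (n : ℤ) = Nat.card (G.Coloring (Fin n))

/-- Number of edges of `G` with both endpoints in `S`. -/
noncomputable def eIn (G : SimpleGraph V) (S : Finset V) : ℕ :=
  (Finset.univ.filter fun e : Sym2 V => e ∈ G.edgeSet ∧ ∀ v ∈ e, v ∈ S).card

/-- Number of edges of `G` with one endpoint in `S` and the other in `S'`. -/
noncomputable def eBetween (G : SimpleGraph V) (S S' : Finset V) : ℕ :=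
  (Finset.univ.filter fun e : Sym2 V =>
    e ∈ G.edgeSet ∧ ∃ a ∈ S, ∃ b ∈ S', e = s(a, b)).card

/-- `π` covers `π'` in the bond lattice. -/
def BondCovers (G : SimpleGraph V) (π π' : Finset (Finset V)) : Prop :=
  IsBondPartition G π ∧ IsBondPartition G π' ∧ Refines π' π ∧ π'.card = π.card + 1

/-- Number of non-singleton blocks. -/
def dcount (π : Finset (Finset V)) : ℕ := (π.filter fun B => 1 < B.card).card

/-- The weight of a covering edge `π → π'`: if `π'` splits the block `S` of `π`
into `S₁ ⊔ S₂`, this is `(1/d(π)) ⬝ e(S₁,S₂)/e(S)`. -/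
noncomputable def covWeight (G : SimpleGraph V) (π π' : Finset (Finset V)) : ℚ :=
  (1 / (dcount π : ℚ)) *
    ((∑ A ∈ π' \ π, ∑ B ∈ π' \ π, if A = B then 0 else (eBetween G A B : ℚ)) / 2) /
    (∑ S ∈ π \ π', (eIn G S : ℚ))

/-- The weight of a path: the product of the weights of its edges. -/
noncomputable def pathWeight (G : SimpleGraph V) : List (Finset (Finset V)) → ℚ
  | [] => 1
  | [_] => 1
  | a :: b :: rest => covWeight G a b * pathWeight G (b :: rest)

/-- `G(π)`: the graph on `V` whose edges are those edges of `G` with both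
endpoints in the same block of `π`. -/
def blockSubgraph (G : SimpleGraph V) (π : Finset (Finset V)) : SimpleGraph V where
  Adj a b := G.Adj a b ∧ ∃ B ∈ π, a ∈ B ∧ b ∈ B
  symm := ⟨fun a b h => ⟨h.1.symm, h.2.imp fun B hB => ⟨hB.1, hB.2.2, hB.2.1⟩⟩⟩
  loopless := ⟨fun a h => G.loopless.irrefl a h.1⟩

/-!
Evaluating the chromatic identity at `q = 1` gives, for `π ≠ 0̂`,
`∑_{σ ≤ π} (-1)^{l-|σ|} m(σ) = P(G(π), 1) = 0`, because some block of `π` has two vertices and,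
being connected, contributes an edge to `G(π)`. So `σ ↦ (-1)^{l-|σ|} m(σ)` satisfies the recursion
defining `μ(0̂, ·)`, whose solution is unique since the system is unitriangular.
-/

section TriangularSystem

variable {α M : Type*} [AddCommGroup M]

theorem eq_on_of_sum_lower_eq {r : α → α → Prop} {s : Finset α}
    (refl : ∀ π ∈ s, r π π) (trans : ∀ τ σ π, r τ σ → r σ π → r τ π)
    (antisymm : ∀ σ ∈ s, ∀ π ∈ s, r σ π → r π σ → σ = π)
    {f g : α → M} (b : α) (hb : f b = g b)
    (h : ∀ π ∈ s, π ≠ b → ∑ σ ∈ s.filter (r · π), f σ = ∑ σ ∈ s.filter (r · π), g σ) :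
    ∀ π ∈ s, f π = g π := by
  intro π hπ
  induction hn : (s.filter (r · π)).card using Nat.strong_induction_on generalizing π with
  | _ n ih =>
    by_cases hπb : π = b
    · exact hπb ▸ hb
    have hπlow : π ∈ s.filter (r · π) := mem_filter.mpr ⟨hπ, refl π hπ⟩
    have hrest : ∀ σ ∈ (s.filter (r · π)).erase π, f σ = g σ := by
      intro σ hσ
      obtain ⟨hσπ, hσs, hrσπ⟩ : σ ≠ π ∧ σ ∈ s ∧ r σ π := by simpa using hσ
      have hlow : s.filter (r · σ) ⊂ s.filter (r · π) :=
        (ssubset_iff_of_subset (monotone_filter_right s fun τ _ hτσ => trans τ σ π hτσ hrσπ)).mpr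
          ⟨π, hπlow, fun hπσ => hσπ (antisymm σ hσs π hπ hrσπ (mem_filter.mp hπσ).2)⟩
      exact ih _ (hn ▸ card_lt_card hlow) σ hσs rfl
    have hsum := h π hπ hπb
    rw [← add_sum_erase _ _ hπlow, ← add_sum_erase _ _ hπlow, sum_congr rfl hrest] at hsum
    exact add_right_cancel hsum

end TriangularSystem

omit [Fintype V] [DecidableEq V] in
theorem refines_refl (π : Finset (Finset V)) : Refines π π :=
  fun B hB => ⟨B, hB, subset_rfl⟩

omit [Fintype V] [DecidableEq V] in
theorem Refines.trans {τ σ π : Finset (Finset V)} (h₁ : Refines τ σ) (h₂ : Refines σ π) :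
    Refines τ π := by
  intro B hB
  obtain ⟨C, hC, hBC⟩ := h₁ B hB
  obtain ⟨D, hD, hCD⟩ := h₂ C hC
  exact ⟨D, hD, hBC.trans hCD⟩

theorem card_botPartition : (botPartition V).card = Fintype.card V := by
  rw [botPartition, card_image_of_injective _ singleton_injective, card_univ]

omit [DecidableEq V] in
theorem mem_bondFinset {G : SimpleGraph V} {π : Finset (Finset V)} :
    π ∈ bondFinset G ↔ IsBondPartition G π := by
  simp [bondFinset]

namespace IsBondPartition

variable {G : SimpleGraph V} {π σ : Finset (Finset V)}

omit [Fintype V] [DecidableEq V] in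
theorem nonempty_of_mem (h : IsBondPartition G π) {B : Finset V} (hB : B ∈ π) : B.Nonempty := by
  obtain ⟨⟨x, hx⟩⟩ := (h.2 B hB).nonempty
  exact ⟨x, hx⟩

omit [Fintype V] [DecidableEq V] in
theorem eq_of_mem_of_mem (h : IsBondPartition G π) {B C : Finset V} (hB : B ∈ π) (hC : C ∈ π)
    {v : V} (hvB : v ∈ B) (hvC : v ∈ C) : B = C :=
  (h.1 v).unique ⟨hB, hvB⟩ ⟨hC, hvC⟩

omit [Fintype V] [DecidableEq V] in
theorem subset_of_refines (hσ : IsBondPartition G σ) (hσπ : Refines σ π) (hπσ : Refines π σ) :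
    σ ⊆ π := by
  intro B hB
  obtain ⟨C, hC, hBC⟩ := hσπ B hB
  obtain ⟨B', hB', hCB'⟩ := hπσ C hC
  obtain ⟨v, hv⟩ := hσ.nonempty_of_mem hB
  have hBB' : B = B' := hσ.eq_of_mem_of_mem hB hB' hv (hCB' (hBC hv))
  rwa [subset_antisymm (hBB' ▸ hCB') hBC] at hC

omit [Fintype V] [DecidableEq V] in
theorem refines_antisymm (hσ : IsBondPartition G σ) (hπ : IsBondPartition G π)
    (hσπ : Refines σ π) (hπσ : Refines π σ) : σ = π :=
  subset_antisymm (hσ.subset_of_refines hσπ hπσ) (hπ.subset_of_refines hπσ hσπ)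

theorem eq_botPartition_of_card_le_one (h : IsBondPartition G π) (hπ : ∀ B ∈ π, B.card ≤ 1) :
    π = botPartition V := by
  have singleton_of_mem : ∀ B ∈ π, ∀ v ∈ B, B = {v} := fun B hB v hv =>
    eq_singleton_iff_unique_mem.mpr ⟨hv, fun x hx => card_le_one.mp (hπ B hB) x hx v hv⟩
  ext B
  simp only [botPartition, mem_image, mem_univ, true_and]
  constructor
  · intro hB
    obtain ⟨v, hv⟩ := h.nonempty_of_mem hB
    exact ⟨v, (singleton_of_mem B hB v hv).symm⟩
  · rintro ⟨v, rfl⟩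
    obtain ⟨C, ⟨hC, hvC⟩, -⟩ := h.1 v
    rwa [← singleton_of_mem C hC v hvC]

theorem blockSubgraph_ne_bot (h : IsBondPartition G π) (hπ : π ≠ botPartition V) :
    blockSubgraph G π ≠ ⊥ := by
  obtain ⟨B, hB, hcard⟩ : ∃ B ∈ π, 1 < B.card := by
    by_contra! hle
    exact hπ (h.eq_botPartition_of_card_le_one hle)
  have : Nontrivial (B : Set V) :=
    Set.nontrivial_coe_sort.mpr (by exact_mod_cast one_lt_card_iff_nontrivial.mp hcard)
  obtain ⟨v, hv⟩ := h.nonempty_of_mem hB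
  obtain ⟨⟨w, hw⟩, hvw⟩ := (h.2 B hB).preconnected.exists_adj_of_nontrivial ⟨v, hv⟩
  exact SimpleGraph.ne_bot_iff_exists_adj.mpr ⟨v, w, hvw, B, hB, hv, hw⟩

end IsBondPartition

omit [DecidableEq V] in
theorem IsChromaticPolynomial.eval_one_eq_zero {H : SimpleGraph V} {P : ℤ[X]}
    (hP : IsChromaticPolynomial H P) (hH : H ≠ ⊥) : P.eval 1 = 0 := by
  have : IsEmpty (H.Coloring (Fin 1)) :=
    not_nonempty_iff.mp (mt SimpleGraph.colorable_one_iff.mp hH)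
  simpa using hP 1

/-- If `m : L_G → ℤ` satisfies `m(0̂) = 1` and
`∑_{0̂ ≤ σ ≤ π} (-1)^{l-|σ|} m(σ) q^{|σ|} = P(G(π), q)` for every `π ∈ L_G`,
then `μ(0̂, π) = (-1)^{l-|π|} m(π)` for all `π ∈ L_G`. -/
theorem mobius_eq_of_chromatic_sums
    (G : SimpleGraph V)
    (mu : Finset (Finset V) → ℤ)
    (hmu0 : mu (botPartition V) = 1)
    (hmu : ∀ π ∈ bondFinset G, π ≠ botPartition V →
      ∑ σ ∈ (bondFinset G).filter (fun σ => Refines σ π), mu σ = 0)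
    (m : Finset (Finset V) → ℤ)
    (hm0 : m (botPartition V) = 1)
    (hm : ∀ π ∈ bondFinset G,
      IsChromaticPolynomial (blockSubgraph G π)
        (∑ σ ∈ (bondFinset G).filter (fun σ => Refines σ π),
          Polynomial.C ((-1 : ℤ) ^ (Fintype.card V - σ.card) * m σ) *
            Polynomial.X ^ σ.card)) :
    ∀ π ∈ bondFinset G, mu π = (-1 : ℤ) ^ (Fintype.card V - π.card) * m π := by
  have signed_sum_eq_zero : ∀ π ∈ bondFinset G, π ≠ botPartition V →
      ∑ σ ∈ (bondFinset G).filter (fun σ => Refines σ π),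
        (-1 : ℤ) ^ (Fintype.card V - σ.card) * m σ = 0 := by
    intro π hπ hπbot
    have heval := (hm π hπ).eval_one_eq_zero
      ((mem_bondFinset.mp hπ).blockSubgraph_ne_bot hπbot)
    simpa [eval_finsetSum] using heval
  refine eq_on_of_sum_lower_eq (fun π _ => refines_refl π) (fun _ _ _ => Refines.trans)
    (fun σ hσ π hπ => (mem_bondFinset.mp hσ).refines_antisymm (mem_bondFinset.mp hπ))
    (botPartition V) (by rw [hmu0, hm0, card_botPartition, Nat.sub_self, pow_zero, mul_one])
    fun π hπ hπbot => ?_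
  rw [hmu π hπ hπbot, signed_sum_eq_zero π hπ hπbot]
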